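/- arXiv:1811.11502 — 2 statements merged into one kernel-verified Lean document; each statement's English description precedes it below -/
import Mathlib

section
/- (Energy dissipation for scheme S1.) Let N ≥ 2, Δx > 0, Δt > 0, let H : ℝ → ℝ be convex and differentiable, V ∈ ℝᴺ, and let K ∈ ℝ^{N×N} be given by K_{ik} = w(i−k) for an even function w : ℤ → ℝ. Suppose ρⁿ, ρⁿ⁺¹, ρ** ∈ ℝᴺ satisfy the S1 scheme: ξ_i = H'(ρⁿ⁺¹_i) + V_i + Δx·∑_{k=1}^{N} K_{ik}ρ**_k; u_{i+1/2} = −(ξ_{i+1} − ξ_i)/Δx for i = 1,…,N−1; F_{i+1/2} = ρᴱ_i·u_{i+1/2}⁺ + ρᵂ_{i+1}·u_{i+1/2}⁻ where ρᴱ, ρᵂ are the second-order minmod reconstructions (θ = 2) of ρⁿ; F_{1/2} = F_{N+1/2} = 0; and ρⁿ⁺¹_i = ρⁿ_i − (Δt/Δx)(F_{i+1/2} − F_{i−1/2}) for all i. Assume ρⁿ_i ≥ 0 for all i and the CFL condition 2·Δt·max(u_{i+1/2}⁺, −u_{i+1/2}⁻) ≤ Δx for every i = 1,…,N−1. If one of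 the following holds: (i) ρ** = (ρⁿ + ρⁿ⁺¹)/2; (ii) ρ** = ρⁿ and K is negative definite; (iii) ρ** = ρⁿ⁺¹ and K is positive definite; then E_Δ(ρⁿ⁺¹) ≤ E_Δ(ρⁿ). -/
/-- The minmod limiter: `min` if all arguments are positive, `max` if all are negative,
and `0` otherwise. -/
noncomputable def minmod3 (a b c : ℝ) : ℝ :=
  if 0 < a ∧ 0 < b ∧ 0 < c then min a (min b c)
  else if a < 0 ∧ b < 0 ∧ c < 0 then max a (max b c)
  else 0

/-- The minmod mslope (θ = 2, mesh `dx`) of a vector `ρ` indexed by `1,…,N`: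
interior cells `2 ≤ i ≤ N−1` use the minmod limiter; the first and last cells get `0`. -/
noncomputable def mslope (N : ℕ) (dx : ℝ) (ρ : ℕ → ℝ) (i : ℕ) : ℝ :=
  if 2 ≤ i ∧ i ≤ N - 1 then
    minmod3 (2 * (ρ (i + 1) - ρ i) / dx)
      ((ρ (i + 1) - ρ (i - 1)) / (2 * dx))
      (2 * (ρ i - ρ (i - 1)) / dx)
  else 0

/-- East reconstruction: `ρᴱ_i = ρ_i + (dx/2)·σ_i`. -/
noncomputable def recE (N : ℕ) (dx : ℝ) (ρ : ℕ → ℝ) (i : ℕ) : ℝ :=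
  ρ i + dx / 2 * mslope N dx ρ i

/-- West reconstruction: `ρᵂ_i = ρ_i − (dx/2)·σ_i`. -/
noncomputable def recW (N : ℕ) (dx : ℝ) (ρ : ℕ → ℝ) (i : ℕ) : ℝ :=
  ρ i - dx / 2 * mslope N dx ρ i

/-- Positive part `z⁺ = max(z,0)`. -/
noncomputable def pospart (z : ℝ) : ℝ := max z 0

/-- Negative part `z⁻ = min(z,0)`. -/
noncomputable def negpart (z : ℝ) : ℝ := min z 0

/-- The discrete free energy
`E_Δ(ρ) = Δx·(∑ H(ρ_i) + ∑ V_i ρ_i + (Δx/2)·∑_{i,k} K_{ik} ρ_i ρ_k)`. -/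
noncomputable def Edisc (N : ℕ) (dx : ℝ) (H : ℝ → ℝ) (V : ℕ → ℝ) (K : ℕ → ℕ → ℝ)
    (ρ : ℕ → ℝ) : ℝ :=
  dx * ((∑ i ∈ Finset.Icc 1 N, H (ρ i)) + (∑ i ∈ Finset.Icc 1 N, V i * ρ i)
    + dx / 2 * ∑ i ∈ Finset.Icc 1 N, ∑ k ∈ Finset.Icc 1 N, K i k * ρ i * ρ k)

/-- The kernel `K` is negative definite: `∑_{i,k} K_{ik}(a_i−b_i)(a_k−b_k) ≤ 0`
for all vectors `a, b` with nonnegative entries. -/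
def NegDefKer (N : ℕ) (K : ℕ → ℕ → ℝ) : Prop :=
  ∀ a b : ℕ → ℝ, (∀ i, 1 ≤ i → i ≤ N → 0 ≤ a i) → (∀ i, 1 ≤ i → i ≤ N → 0 ≤ b i) →
    ∑ i ∈ Finset.Icc 1 N, ∑ k ∈ Finset.Icc 1 N, K i k * (a i - b i) * (a k - b k) ≤ 0

/-- The kernel `K` is positive definite: `∑_{i,k} K_{ik}(a_i−b_i)(a_k−b_k) ≥ 0`
for all vectors `a, b` with nonnegative entries. -/
def PosDefKer (N : ℕ) (K : ℕ → ℕ → ℝ) : Prop :=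
  ∀ a b : ℕ → ℝ, (∀ i, 1 ≤ i → i ≤ N → 0 ≤ a i) → (∀ i, 1 ≤ i → i ≤ N → 0 ≤ b i) →
    0 ≤ ∑ i ∈ Finset.Icc 1 N, ∑ k ∈ Finset.Icc 1 N, K i k * (a i - b i) * (a k - b k)


/-!
Convexity gives `H(ρⁿ⁺¹_i) − H(ρⁿ_i) ≤ H'(ρⁿ⁺¹_i)(ρⁿ⁺¹_i − ρⁿ_i)`, and for the symmetric kernel
`K` the change of the interaction energy is `B(ρⁿ⁺¹ − ρⁿ, ρⁿ⁺¹ + ρⁿ)` with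
`B(x, y) = ∑ K_{ik} x_i y_k`. Writing `ρⁿ⁺¹ + ρⁿ` as `2ρ**`, `2ρ** + (ρⁿ⁺¹ − ρⁿ)` or
`2ρ** − (ρⁿ⁺¹ − ρⁿ)` in the three cases, the sign of `K` on differences of nonnegative vectors
absorbs the remainder, so `E_Δ(ρⁿ⁺¹) − E_Δ(ρⁿ) ≤ Δx ∑ (ρⁿ⁺¹_i − ρⁿ_i) ξ_i`. Summation by parts
turns the right side into `−Δt Δx ∑ F_{i+1/2} u_{i+1/2}`, and the upwind flux has the sign of
`u` because the minmod reconstructions of a nonnegative vector are nonnegative.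

Cases (ii) and (iii) need `ρⁿ⁺¹ ≥ 0`: under the CFL condition
`Δx ρⁿ⁺¹_i = (Δx/2 ρᴱ_i − Δt F_{i+1/2}) + (Δx/2 ρᵂ_i + Δt F_{i−1/2})` with both brackets
nonnegative.
-/

open Finset

theorem ConvexOn.sub_le_deriv_mul_sub {S : Set ℝ} {f : ℝ → ℝ} {x y : ℝ} (hf : ConvexOn ℝ S f)
    (hx : x ∈ S) (hy : y ∈ S) (hfx : DifferentiableAt ℝ f x) :
    f x - f y ≤ deriv f x * (x - y) := by
  rcases lt_trichotomy x y with hxy | rfl | hxy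
  · have h := hf.deriv_le_slope hx hy hxy hfx
    rw [slope_def_field, le_div_iff₀ (sub_pos.mpr hxy)] at h
    linarith
  · simp
  · have h := hf.slope_le_deriv hy hx hxy hfx
    rwa [slope_def_field, div_le_iff₀ (sub_pos.mpr hxy)] at h

theorem min_zero_le_minmod3 (a b c : ℝ) : min a 0 ≤ minmod3 a b c := by
  unfold minmod3
  split_ifs with hpos hneg
  · exact (min_le_right a 0).trans (lt_min hpos.1 (lt_min hpos.2.1 hpos.2.2)).le
  · exact (min_le_left a 0).trans (le_max_left _ _)
  · exact min_le_right a 0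

theorem minmod3_le_max_zero (a b c : ℝ) : minmod3 a b c ≤ max c 0 := by
  unfold minmod3
  split_ifs with hpos hneg
  · exact ((min_le_right _ _).trans (min_le_right _ _)).trans (le_max_left c 0)
  · exact (max_lt hneg.1 (max_lt hneg.2.1 hneg.2.2)).le.trans (le_max_right c 0)
  · exact le_max_right c 0

theorem min_le_add_half_mul_minmod3 {dx : ℝ} (hdx : 0 < dx) (p q b c : ℝ) :
    min p q ≤ p + dx / 2 * minmod3 (2 * (q - p) / dx) b c := by
  have hscale : dx / 2 * (2 * (q - p) / dx) = q - p := by field_simp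
  rcases min_le_iff.mp (min_zero_le_minmod3 (2 * (q - p) / dx) b c) with h | h
  · have := mul_le_mul_of_nonneg_left h (half_pos hdx).le
    linarith [min_le_right p q]
  · have := mul_nonneg (half_pos hdx).le h
    linarith [min_le_left p q]

theorem min_le_sub_half_mul_minmod3 {dx : ℝ} (hdx : 0 < dx) (p r a b : ℝ) :
    min p r ≤ p - dx / 2 * minmod3 a b (2 * (p - r) / dx) := by
  have hscale : dx / 2 * (2 * (p - r) / dx) = p - r := by field_simp
  rcases le_max_iff.mp (minmod3_le_max_zero a b (2 * (p - r) / dx)) with h | h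
  · have := mul_le_mul_of_nonneg_left h (half_pos hdx).le
    linarith [min_le_right p r]
  · have := mul_le_mul_of_nonneg_left h (half_pos hdx).le
    linarith [min_le_left p r]

section Reconstruction

variable {N : ℕ} {dx : ℝ} {ρ : ℕ → ℝ} {i : ℕ}

theorem recE_nonneg (hdx : 0 < dx) (hρ : ∀ i, 1 ≤ i → i ≤ N → 0 ≤ ρ i) (hi1 : 1 ≤ i)
    (hiN : i ≤ N) : 0 ≤ recE N dx ρ i := by
  unfold recE mslope
  split_ifs with hint
  · exact le_trans (le_min (hρ i hi1 hiN) (hρ (i + 1) (by omega) (by omega)))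
      (min_le_add_half_mul_minmod3 hdx _ _ _ _)
  · simpa using hρ i hi1 hiN

theorem recW_nonneg (hdx : 0 < dx) (hρ : ∀ i, 1 ≤ i → i ≤ N → 0 ≤ ρ i) (hi1 : 1 ≤ i)
    (hiN : i ≤ N) : 0 ≤ recW N dx ρ i := by
  unfold recW mslope
  split_ifs with hint
  · exact le_trans (le_min (hρ i hi1 hiN) (hρ (i - 1) (by omega) (by omega)))
      (min_le_sub_half_mul_minmod3 hdx _ _ _ _)
  · simpa using hρ i hi1 hiN

theorem recE_add_recW (N : ℕ) (dx : ℝ) (ρ : ℕ → ℝ) (i : ℕ) :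
    recE N dx ρ i + recW N dx ρ i = 2 * ρ i := by
  unfold recE recW; ring

end Reconstruction

noncomputable def upwindFlux (e w u : ℝ) : ℝ := e * pospart u + w * negpart u

section Upwind

variable {e w u dx dt : ℝ}

theorem upwindFlux_mul_nonneg (he : 0 ≤ e) (hw : 0 ≤ w) : 0 ≤ upwindFlux e w u * u := by
  unfold upwindFlux pospart negpart
  rcases le_total 0 u with hu | hu
  · rw [max_eq_left hu, min_eq_right hu]
    nlinarith [mul_nonneg (mul_nonneg he hu) hu]
  · rw [max_eq_right hu, min_eq_left hu]
    nlinarith [mul_nonneg hw (mul_nonneg_of_nonpos_of_nonpos hu hu)]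

theorem mul_upwindFlux_le (he : 0 ≤ e) (hw : 0 ≤ w) (hdt : 0 ≤ dt)
    (hcfl : 2 * dt * max (pospart u) (-negpart u) ≤ dx) :
    dt * upwindFlux e w u ≤ dx / 2 * e := by
  unfold upwindFlux pospart negpart at *
  rcases le_total 0 u with hu | hu
  · rw [max_eq_left hu, min_eq_right hu, neg_zero, max_eq_left hu] at *
    nlinarith [mul_nonneg he (mul_nonneg hdt hu)]
  · rw [max_eq_right hu, min_eq_left hu, max_eq_right (by linarith)] at *
    have hdx : 0 ≤ dx := by nlinarith
    nlinarith [mul_nonneg hdx he, mul_nonneg (mul_nonneg hdt hw) (neg_nonneg.2 hu)]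

theorem neg_le_mul_upwindFlux (he : 0 ≤ e) (hw : 0 ≤ w) (hdt : 0 ≤ dt)
    (hcfl : 2 * dt * max (pospart u) (-negpart u) ≤ dx) :
    -(dx / 2 * w) ≤ dt * upwindFlux e w u := by
  unfold upwindFlux pospart negpart at *
  rcases le_total 0 u with hu | hu
  · rw [max_eq_left hu, min_eq_right hu, neg_zero, max_eq_left hu] at *
    have hdx : 0 ≤ dx := by nlinarith
    nlinarith [mul_nonneg hdx hw, mul_nonneg (mul_nonneg hdt he) hu]
  · rw [max_eq_right hu, min_eq_left hu, max_eq_right (by linarith)] at *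
    nlinarith [mul_nonneg hw (mul_nonneg hdt (neg_nonneg.2 hu))]

end Upwind

theorem sum_Icc_sub_mul_eq (F ξ : ℕ → ℝ) (n : ℕ) :
    ∑ i ∈ Icc 1 (n + 1), (F i - F (i - 1)) * ξ i
      = F (n + 1) * ξ (n + 1) - F 0 * ξ 1 + ∑ i ∈ Icc 1 n, F i * (ξ i - ξ (i + 1)) := by
  induction n with
  | zero => simp; ring
  | succ n ih =>
    rw [sum_Icc_succ_top (by omega), ih, sum_Icc_succ_top (by omega)]
    simp only [Nat.add_sub_cancel]
    ring

theorem sum_Icc_sub_mul_eq_of_boundary {N : ℕ} {F : ℕ → ℝ} (hF0 : F 0 = 0) (hFN : F N = 0)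
    (ξ : ℕ → ℝ) :
    ∑ i ∈ Icc 1 N, (F i - F (i - 1)) * ξ i = ∑ i ∈ Icc 1 (N - 1), F i * (ξ i - ξ (i + 1)) := by
  cases N with
  | zero => simp
  | succ n => rw [sum_Icc_sub_mul_eq, hF0, hFN, Nat.add_sub_cancel]; ring

def kerForm (N : ℕ) (K : ℕ → ℕ → ℝ) (x y : ℕ → ℝ) : ℝ :=
  ∑ i ∈ Icc 1 N, ∑ k ∈ Icc 1 N, K i k * x i * y k

section KerForm

variable {N : ℕ} {K : ℕ → ℕ → ℝ}

theorem kerForm_comm (hK : ∀ i k, K i k = K k i) (x y : ℕ → ℝ) :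
    kerForm N K x y = kerForm N K y x := by
  unfold kerForm
  rw [sum_comm]
  exact sum_congr rfl fun i _ => sum_congr rfl fun k _ => by rw [hK]; ring

theorem kerForm_congr_right {x y z : ℕ → ℝ} (h : ∀ k, 1 ≤ k → k ≤ N → y k = z k) :
    kerForm N K x y = kerForm N K x z :=
  sum_congr rfl fun _ _ => sum_congr rfl fun k hk => by
    rw [h k (mem_Icc.mp hk).1 (mem_Icc.mp hk).2]

theorem kerForm_add_right (x y z : ℕ → ℝ) :
    kerForm N K x (y + z) = kerForm N K x y + kerForm N K x z := by
  simp only [kerForm, Pi.add_apply, mul_add, sum_add_distrib]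

theorem kerForm_sub_right (x y z : ℕ → ℝ) :
    kerForm N K x (y - z) = kerForm N K x y - kerForm N K x z := by
  simp only [kerForm, Pi.sub_apply, mul_sub, sum_sub_distrib]

theorem kerForm_smul_right (c : ℝ) (x y : ℕ → ℝ) :
    kerForm N K x (c • y) = c * kerForm N K x y := by
  simp only [kerForm, Pi.smul_apply, smul_eq_mul, mul_sum]
  exact sum_congr rfl fun i _ => sum_congr rfl fun k _ => by ring

theorem kerForm_sub_left (x x' y : ℕ → ℝ) :
    kerForm N K (x - x') y = kerForm N K x y - kerForm N K x' y := by
  simp only [kerForm, Pi.sub_apply, mul_sub, sub_mul, sum_sub_distrib]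

theorem kerForm_self_sub_self (hK : ∀ i k, K i k = K k i) (a b : ℕ → ℝ) :
    kerForm N K a a - kerForm N K b b = kerForm N K (a - b) (a + b) := by
  rw [kerForm_sub_left, kerForm_add_right, kerForm_add_right, kerForm_comm hK b a]
  ring

theorem kerForm_self_sub_self_le (hK : ∀ i k, K i k = K k i) {a b s : ℕ → ℝ}
    (ha : ∀ i, 1 ≤ i → i ≤ N → 0 ≤ a i) (hb : ∀ i, 1 ≤ i → i ≤ N → 0 ≤ b i)
    (hs : (∀ i, 1 ≤ i → i ≤ N → s i = (b i + a i) / 2) ∨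
      ((∀ i, 1 ≤ i → i ≤ N → s i = b i) ∧ NegDefKer N K) ∨
      ((∀ i, 1 ≤ i → i ≤ N → s i = a i) ∧ PosDefKer N K)) :
    kerForm N K a a - kerForm N K b b ≤ 2 * kerForm N K (a - b) s := by
  rw [kerForm_self_sub_self hK]
  rcases hs with hs | ⟨hs, hneg⟩ | ⟨hs, hpos⟩
  · rw [kerForm_congr_right (y := a + b) (z := (2 : ℝ) • s) fun k h1 h2 => by
      simp only [Pi.add_apply, Pi.smul_apply, smul_eq_mul, hs k h1 h2]; ring,
      kerForm_smul_right]
  · have hδ : kerForm N K (a - b) (a - b) ≤ 0 := hneg a b ha hb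
    rw [kerForm_congr_right (y := a + b) (z := (a - b) + (2 : ℝ) • s) fun k h1 h2 => by
      simp only [Pi.add_apply, Pi.sub_apply, Pi.smul_apply, smul_eq_mul, hs k h1 h2]; ring,
      kerForm_add_right, kerForm_smul_right]
    linarith
  · have hδ : 0 ≤ kerForm N K (a - b) (a - b) := hpos a b ha hb
    rw [kerForm_congr_right (y := a + b) (z := (2 : ℝ) • s - (a - b)) fun k h1 h2 => by
      simp only [Pi.add_apply, Pi.sub_apply, Pi.smul_apply, smul_eq_mul, hs k h1 h2]; ring,
      kerForm_sub_right, kerForm_smul_right]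
    linarith

end KerForm

theorem Edisc_sub_le {N : ℕ} {dx : ℝ} {H : ℝ → ℝ} {V : ℕ → ℝ} {K : ℕ → ℕ → ℝ}
    {a b s ξ : ℕ → ℝ} (hdx : 0 ≤ dx) (hHconv : ConvexOn ℝ Set.univ H)
    (hHdiff : Differentiable ℝ H)
    (hK : kerForm N K a a - kerForm N K b b ≤ 2 * kerForm N K (a - b) s)
    (hξ : ∀ i, 1 ≤ i → i ≤ N → ξ i = deriv H (a i) + V i + dx * ∑ k ∈ Icc 1 N, K i k * s k) :
    Edisc N dx H V K a - Edisc N dx H V K b ≤ dx * ∑ i ∈ Icc 1 N, (a i - b i) * ξ i := by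
  have hH : ∑ i ∈ Icc 1 N, (H (a i) - H (b i)) ≤ ∑ i ∈ Icc 1 N, deriv H (a i) * (a i - b i) :=
    sum_le_sum fun i _ =>
      hHconv.sub_le_deriv_mul_sub (Set.mem_univ _) (Set.mem_univ _) (hHdiff _)
  have hξsum : ∑ i ∈ Icc 1 N, (a i - b i) * ξ i
      = ∑ i ∈ Icc 1 N, deriv H (a i) * (a i - b i) + ∑ i ∈ Icc 1 N, V i * (a i - b i)
        + dx * kerForm N K (a - b) s := by
    rw [sum_congr rfl fun i hi => by rw [hξ i (mem_Icc.mp hi).1 (mem_Icc.mp hi).2]]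
    simp only [kerForm, Pi.sub_apply, mul_add, mul_sum, sum_add_distrib]
    congr 1
    · congr 1 <;> exact sum_congr rfl fun i _ => by ring
    · exact sum_congr rfl fun i _ => sum_congr rfl fun k _ => by ring
  have hE : Edisc N dx H V K a - Edisc N dx H V K b
      = dx * (∑ i ∈ Icc 1 N, (H (a i) - H (b i)) + ∑ i ∈ Icc 1 N, V i * (a i - b i)
        + dx / 2 * (kerForm N K a a - kerForm N K b b)) := by
    simp only [Edisc, kerForm, sum_sub_distrib, mul_sub]
    ring
  have hKdx := mul_le_mul_of_nonneg_left hK (div_nonneg hdx zero_le_two)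
  rw [hE, hξsum]
  gcongr dx * ?_
  linarith

section SchemeS1

variable {N : ℕ} {dx dt : ℝ} {ρn ρn1 ξ u F : ℕ → ℝ}

theorem S1_update_nonneg (hdx : 0 < dx) (hdt : 0 ≤ dt)
    (hF : ∀ i, 1 ≤ i → i ≤ N - 1 →
      F i = recE N dx ρn i * pospart (u i) + recW N dx ρn (i + 1) * negpart (u i))
    (hF0 : F 0 = 0) (hFN : F N = 0)
    (hupd : ∀ i, 1 ≤ i → i ≤ N → ρn1 i = ρn i - dt / dx * (F i - F (i - 1)))
    (hpos : ∀ i, 1 ≤ i → i ≤ N → 0 ≤ ρn i)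
    (hCFL : ∀ i, 1 ≤ i → i ≤ N - 1 → 2 * dt * max (pospart (u i)) (-negpart (u i)) ≤ dx) :
    ∀ i, 1 ≤ i → i ≤ N → 0 ≤ ρn1 i := by
  intro i hi1 hiN
  have hE := recE_nonneg hdx hpos hi1 hiN
  have hW := recW_nonneg hdx hpos hi1 hiN
  have hout : dt * F i ≤ dx / 2 * recE N dx ρn i := by
    rcases hiN.eq_or_lt with rfl | hiN'
    · rw [hFN, mul_zero]; positivity
    · rw [hF i hi1 (by omega)]
      exact mul_upwindFlux_le hE (recW_nonneg hdx hpos (by omega) hiN') hdt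
        (hCFL i hi1 (by omega))
  have hin : -(dx / 2 * recW N dx ρn i) ≤ dt * F (i - 1) := by
    rcases hi1.eq_or_lt with rfl | hi1'
    · rw [Nat.sub_self, hF0, mul_zero, neg_nonpos]; positivity
    · have := neg_le_mul_upwindFlux (recE_nonneg hdx hpos (by omega : 1 ≤ i - 1) (by omega)) hW
        hdt (hCFL (i - 1) (by omega) (by omega))
      rwa [hF (i - 1) (by omega) (by omega), Nat.sub_add_cancel hi1]
  have hρ : ρn1 i = ((dx / 2 * recE N dx ρn i - dt * F i)
      + (dx / 2 * recW N dx ρn i + dt * F (i - 1))) / dx := by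
    rw [hupd i hi1 hiN, eq_div_iff hdx.ne']
    field_simp
    linear_combination (-dx) * recE_add_recW N dx ρn i
  rw [hρ]
  apply div_nonneg _ hdx.le
  linarith

theorem S1_sum_sub_mul_nonpos (hdx : 0 < dx) (hdt : 0 ≤ dt)
    (hu : ∀ i, 1 ≤ i → i ≤ N - 1 → u i = -(ξ (i + 1) - ξ i) / dx)
    (hF : ∀ i, 1 ≤ i → i ≤ N - 1 →
      F i = recE N dx ρn i * pospart (u i) + recW N dx ρn (i + 1) * negpart (u i))
    (hF0 : F 0 = 0) (hFN : F N = 0)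
    (hupd : ∀ i, 1 ≤ i → i ≤ N → ρn1 i = ρn i - dt / dx * (F i - F (i - 1)))
    (hpos : ∀ i, 1 ≤ i → i ≤ N → 0 ≤ ρn i) :
    ∑ i ∈ Icc 1 N, (ρn1 i - ρn i) * ξ i ≤ 0 := by
  have hδ : ∑ i ∈ Icc 1 N, (ρn1 i - ρn i) * ξ i
      = -(dt / dx) * ∑ i ∈ Icc 1 N, (F i - F (i - 1)) * ξ i := by
    rw [mul_sum]
    exact sum_congr rfl fun i hi => by
      rw [hupd i (mem_Icc.mp hi).1 (mem_Icc.mp hi).2]; ring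
  rw [hδ, sum_Icc_sub_mul_eq_of_boundary hF0 hFN]
  refine mul_nonpos_of_nonpos_of_nonneg (neg_nonpos.mpr (by positivity)) (sum_nonneg ?_)
  intro i hi
  obtain ⟨hi1, hi2⟩ := mem_Icc.mp hi
  have hξ : ξ i - ξ (i + 1) = dx * u i := by
    rw [hu i hi1 hi2]; field_simp; ring
  rw [hξ, hF i hi1 hi2, mul_left_comm]
  exact mul_nonneg hdx.le (upwindFlux_mul_nonneg (recE_nonneg hdx hpos hi1 (by omega))
    (recW_nonneg hdx hpos (by omega) (by omega)))

end SchemeS1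

theorem stmt_6_general (N : ℕ) (dx dt : ℝ) (hdx : 0 < dx) (hdt : 0 < dt)
    (H : ℝ → ℝ) (hHconv : ConvexOn ℝ Set.univ H) (hHdiff : Differentiable ℝ H)
    (V : ℕ → ℝ) (w : ℤ → ℝ) (hw : ∀ m : ℤ, w (-m) = w m)
    (K : ℕ → ℕ → ℝ) (hK : ∀ i k : ℕ, K i k = w ((i : ℤ) - (k : ℤ)))
    (ρn ρn1 ρss ξ u F : ℕ → ℝ)
    (hξ : ∀ i, 1 ≤ i → i ≤ N →
      ξ i = deriv H (ρn1 i) + V i + dx * ∑ k ∈ Finset.Icc 1 N, K i k * ρss k)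
    (hu : ∀ i, 1 ≤ i → i ≤ N - 1 → u i = -(ξ (i + 1) - ξ i) / dx)
    (hF : ∀ i, 1 ≤ i → i ≤ N - 1 →
      F i = recE N dx ρn i * pospart (u i) + recW N dx ρn (i + 1) * negpart (u i))
    (hF0 : F 0 = 0) (hFN : F N = 0)
    (hupd : ∀ i, 1 ≤ i → i ≤ N → ρn1 i = ρn i - dt / dx * (F i - F (i - 1)))
    (hpos : ∀ i, 1 ≤ i → i ≤ N → 0 ≤ ρn i)
    (hCFL : ∀ i, 1 ≤ i → i ≤ N - 1 →
      2 * dt * max (pospart (u i)) (-negpart (u i)) ≤ dx)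
    (hcase :
      (∀ i, 1 ≤ i → i ≤ N → ρss i = (ρn i + ρn1 i) / 2) ∨
      ((∀ i, 1 ≤ i → i ≤ N → ρss i = ρn i) ∧ NegDefKer N K) ∨
      ((∀ i, 1 ≤ i → i ≤ N → ρss i = ρn1 i) ∧ PosDefKer N K)) :
    Edisc N dx H V K ρn1 ≤ Edisc N dx H V K ρn := by
  have hsym : ∀ i k, K i k = K k i := fun i k => by
    rw [hK, hK, ← hw, neg_sub]
  have hpos1 := S1_update_nonneg hdx hdt.le hF hF0 hFN hupd hpos hCFL
  have hquad := kerForm_self_sub_self_le hsym hpos1 hpos hcase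
  have henergy := Edisc_sub_le hdx.le hHconv hHdiff hquad hξ
  have hflux := S1_sum_sub_mul_nonpos hdx hdt.le hu hF hF0 hFN hupd hpos
  exact sub_nonpos.mp (henergy.trans (mul_nonpos_of_nonneg_of_nonpos hdx.le hflux))

/-- energy dissipation for the fully discrete scheme S1 under the CFL
condition, for each of the three admissible choices of the convolution variable `ρ**`. -/
theorem stmt_6 (N : ℕ) (hN : 2 ≤ N) (dx dt : ℝ) (hdx : 0 < dx) (hdt : 0 < dt)
    (H : ℝ → ℝ) (hHconv : ConvexOn ℝ Set.univ H) (hHdiff : Differentiable ℝ H)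
    (V : ℕ → ℝ) (w : ℤ → ℝ) (hw : ∀ m : ℤ, w (-m) = w m)
    (K : ℕ → ℕ → ℝ) (hK : ∀ i k : ℕ, K i k = w ((i : ℤ) - (k : ℤ)))
    (ρn ρn1 ρss ξ u F : ℕ → ℝ)
    (hξ : ∀ i, 1 ≤ i → i ≤ N →
      ξ i = deriv H (ρn1 i) + V i + dx * ∑ k ∈ Finset.Icc 1 N, K i k * ρss k)
    (hu : ∀ i, 1 ≤ i → i ≤ N - 1 → u i = -(ξ (i + 1) - ξ i) / dx)
    (hF : ∀ i, 1 ≤ i → i ≤ N - 1 →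
      F i = recE N dx ρn i * pospart (u i) + recW N dx ρn (i + 1) * negpart (u i))
    (hF0 : F 0 = 0) (hFN : F N = 0)
    (hupd : ∀ i, 1 ≤ i → i ≤ N → ρn1 i = ρn i - dt / dx * (F i - F (i - 1)))
    (hpos : ∀ i, 1 ≤ i → i ≤ N → 0 ≤ ρn i)
    (hCFL : ∀ i, 1 ≤ i → i ≤ N - 1 →
      2 * dt * max (pospart (u i)) (-negpart (u i)) ≤ dx)
    (hcase :
      (∀ i, 1 ≤ i → i ≤ N → ρss i = (ρn i + ρn1 i) / 2) ∨
      ((∀ i, 1 ≤ i → i ≤ N → ρss i = ρn i) ∧ NegDefKer N K) ∨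
      ((∀ i, 1 ≤ i → i ≤ N → ρss i = ρn1 i) ∧ PosDefKer N K)) :
    Edisc N dx H V K ρn1 ≤ Edisc N dx H V K ρn :=
  stmt_6_general N dx dt hdx hdt H hHconv hHdiff V w hw K hK ρn ρn1 ρss ξ u F hξ hu hF hF0 hFN hupd
    hpos hCFL hcase
end

section
/- (Unconditional positivity of the implicit scheme S2.) Let N ≥ 2, Δx > 0, Δt > 0. Suppose ρⁿ, ρⁿ⁺¹ ∈ ℝᴺ and real interior interface velocities u_{i+1/2} (i = 1,…,N−1) satisfy the fully implicit upwind relations F_{i+1/2} = ρⁿ⁺¹_i·u_{i+1/2}⁺ + ρⁿ⁺¹_{i+1}·u_{i+1/2}⁻ for i = 1,…,N−1, F_{1/2} = F_{N+1/2} = 0 (no-flux boundary conditions), and ρⁿ⁺¹_i = ρⁿ_i − (Δt/Δx)(F_{i+1/2} − F_{i−1/2}) for every i = 1,…,N. If ρⁿ_i ≥ 0 for all i, then ρⁿ⁺¹_i ≥ 0 for all i, with no restriction on Δt, Δx, or the velocities. -/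
open Finset

noncomputable def negIndicator (r : ℝ) : ℝ := if r < 0 then 1 else 0

lemma negIndicator_nonneg (r : ℝ) : 0 ≤ negIndicator r := by
  unfold negIndicator; split_ifs <;> norm_num

lemma negpart_nonpos (r : ℝ) : negpart r ≤ 0 := min_le_right r 0

lemma negpart_eq_zero_iff {r : ℝ} : negpart r = 0 ↔ 0 ≤ r := min_eq_right_iff

lemma negpart_eq_mul_negIndicator (r : ℝ) : negpart r = r * negIndicator r := by
  by_cases hr : r < 0
  · simp [negpart, negIndicator, hr, hr.le]
  · simp [negpart, negIndicator, hr, not_lt.mp hr]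

lemma upwind_flux_mul_negIndicator_sub_nonpos (r s u : ℝ) :
    (r * pospart u + s * negpart u) * (negIndicator r - negIndicator s) ≤ 0 := by
  have hu_pos : 0 ≤ pospart u := le_max_right u 0
  have hu_neg : negpart u ≤ 0 := negpart_nonpos u
  by_cases hr : r < 0 <;> by_cases hs : s < 0 <;> simp [negIndicator, hr, hs]
  · nlinarith
  · nlinarith

theorem Finset.sum_range_mul_sub_eq_of_eq_zero {R : Type*} [CommRing R] (χ F : ℕ → R) {n : ℕ}
    (h₀ : F 0 = 0) (hn : F n = 0) :
    ∑ i ∈ range n, χ (i + 1) * (F (i + 1) - F i) = ∑ i ∈ range n, F i * (χ i - χ (i + 1)) := by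
  have htel := sum_range_sub (fun i => χ i * F i) n
  simp only [h₀, hn, mul_zero, sub_zero] at htel
  rw [← sub_eq_zero, ← sum_sub_distrib, ← htel]
  exact sum_congr rfl fun i _ => by ring

lemma sum_negIndicator_mul_upwind_flux_sub_nonpos (N : ℕ) (ρ u F : ℕ → ℝ)
    (hF : ∀ i, 1 ≤ i → i ≤ N - 1 → F i = ρ i * pospart (u i) + ρ (i + 1) * negpart (u i))
    (hF0 : F 0 = 0) (hFN : F N = 0) :
    ∑ i ∈ range N, negIndicator (ρ (i + 1)) * (F (i + 1) - F i) ≤ 0 := by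
  rw [sum_range_mul_sub_eq_of_eq_zero (fun i => negIndicator (ρ i)) F hF0 hFN]
  refine sum_nonpos fun i hi => ?_
  rcases i with _ | i
  · simp [hF0]
  · rw [hF (i + 1) (by omega) (by simp at hi; omega)]
    exact upwind_flux_mul_negIndicator_sub_nonpos _ _ _

theorem stmt_7_general (N : ℕ) (dx dt : ℝ) (hdx : 0 < dx) (hdt : 0 < dt)
    (ρn ρn1 u F : ℕ → ℝ)
    (hF : ∀ i, 1 ≤ i → i ≤ N - 1 →
      F i = ρn1 i * pospart (u i) + ρn1 (i + 1) * negpart (u i))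
    (hF0 : F 0 = 0) (hFN : F N = 0)
    (hupd : ∀ i, 1 ≤ i → i ≤ N → ρn1 i = ρn i - dt / dx * (F i - F (i - 1)))
    (hpos : ∀ i, 1 ≤ i → i ≤ N → 0 ≤ ρn i) :
    ∀ i, 1 ≤ i → i ≤ N → 0 ≤ ρn1 i := by
  set χ : ℕ → ℝ := fun i => negIndicator (ρn1 i)
  have hratio : 0 ≤ dt / dx := (div_pos hdt hdx).le
  have hmass : ∑ i ∈ range N, negpart (ρn1 (i + 1)) =
      ∑ i ∈ range N, χ (i + 1) * ρn (i + 1)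
        - dt / dx * ∑ i ∈ range N, χ (i + 1) * (F (i + 1) - F i) := by
    rw [mul_sum, ← sum_sub_distrib]
    refine sum_congr rfl fun i hi => ?_
    rw [negpart_eq_mul_negIndicator]
    nth_rw 1 [hupd (i + 1) (by omega) (by simp at hi; omega)]
    rw [Nat.add_sub_cancel]
    ring
  have hρn : 0 ≤ ∑ i ∈ range N, χ (i + 1) * ρn (i + 1) :=
    sum_nonneg fun i hi =>
      mul_nonneg (negIndicator_nonneg _) (hpos _ (by omega) (by simp at hi; omega))
  have hflux : dt / dx * ∑ i ∈ range N, χ (i + 1) * (F (i + 1) - F i) ≤ 0 :=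
    mul_nonpos_of_nonneg_of_nonpos hratio
      (sum_negIndicator_mul_upwind_flux_sub_nonpos N ρn1 u F hF hF0 hFN)
  have hzero := (sum_eq_zero_iff_of_nonpos fun i _ => negpart_nonpos (ρn1 (i + 1))).1
    (le_antisymm (sum_nonpos fun i _ => negpart_nonpos _) (by linarith))
  intro i hi1 hiN
  obtain ⟨k, rfl⟩ := Nat.exists_eq_add_of_le' hi1
  exact negpart_eq_zero_iff.1 (hzero k (mem_range.2 (by omega)))

/-- unconditional positivity of the implicit scheme S2, for arbitrary
interface velocities, with no restriction on `Δt`, `Δx`, or the velocities. -/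
theorem stmt_7 (N : ℕ) (hN : 2 ≤ N) (dx dt : ℝ) (hdx : 0 < dx) (hdt : 0 < dt)
    (ρn ρn1 u F : ℕ → ℝ)
    (hF : ∀ i, 1 ≤ i → i ≤ N - 1 →
      F i = ρn1 i * pospart (u i) + ρn1 (i + 1) * negpart (u i))
    (hF0 : F 0 = 0) (hFN : F N = 0)
    (hupd : ∀ i, 1 ≤ i → i ≤ N → ρn1 i = ρn i - dt / dx * (F i - F (i - 1)))
    (hpos : ∀ i, 1 ≤ i → i ≤ N → 0 ≤ ρn i) :
    ∀ i, 1 ≤ i → i ≤ N → 0 ≤ ρn1 i :=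
  stmt_7_general N dx dt hdx hdt ρn ρn1 u F hF hF0 hFN hupd hpos
end
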